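/- Let A ∈ SO(2N, ℂ) be a diagonalizable matrix having 1 as an eigenvalue. Then A commutes with some element of O(2N, ℂ) of determinant −1. -/
import Mathlib


open Matrix

/-- A matrix is diagonalizable if it is conjugate (by an invertible matrix)
to a diagonal matrix. -/
def Matrix.IsDiagonalizable {n : Type*} [Fintype n] [DecidableEq n]
    (A : Matrix n n ℂ) : Prop :=
  ∃ (P : (Matrix n n ℂ)ˣ) (d : n → ℂ),
    (↑P⁻¹ : Matrix n n ℂ) * A * (↑P : Matrix n n ℂ) = Matrix.diagonal d

/-- A diagonalizable matrix `A ∈ SO(2N, ℂ)` having `1` as an eigenvalue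
commutes with some element of `O(2N, ℂ)` of determinant `−1`. -/
theorem commutes_with_odd_orthogonal_element (N : ℕ)
    (A : Matrix (Fin (2 * N)) (Fin (2 * N)) ℂ)
    (hAO : Aᵀ * A = 1) (hAdet : A.det = 1)
    (hAdiag : A.IsDiagonalizable)
    (heig : ∃ v : Fin (2 * N) → ℂ, v ≠ 0 ∧ A.mulVec v = v) :
    ∃ Q : Matrix (Fin (2 * N)) (Fin (2 * N)) ℂ,
      Qᵀ * Q = 1 ∧ Q.det = -1 ∧ A * Q = Q * A := by
  -- A preserves the dot product
  have hdot : ∀ x y : Fin (2 * N) → ℂ, (A *ᵥ x) ⬝ᵥ (A *ᵥ y) = x ⬝ᵥ y := by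
    intro x y
    rw [Matrix.dotProduct_mulVec, ← Matrix.mulVec_transpose, Matrix.mulVec_mulVec, hAO,
      Matrix.one_mulVec]
  -- Step 1: there is a fixed vector `v` of `A` with `v ⬝ᵥ v ≠ 0`.
  have key : ∃ v : Fin (2 * N) → ℂ, A *ᵥ v = v ∧ v ⬝ᵥ v ≠ 0 := by
    by_contra hcon
    push_neg at hcon
    obtain ⟨v, hv0, hv⟩ := heig
    obtain ⟨P, d, hP⟩ := hAdiag
    set p : Matrix (Fin (2 * N)) (Fin (2 * N)) ℂ := (↑P : Matrix (Fin (2 * N)) (Fin (2 * N)) ℂ)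
      with hp
    set q : Matrix (Fin (2 * N)) (Fin (2 * N)) ℂ := (↑P⁻¹ : Matrix (Fin (2 * N)) (Fin (2 * N)) ℂ)
      with hq
    have hpq : p * q = 1 := Units.mul_inv P
    have hqp : q * p = 1 := Units.inv_mul P
    have hAP : A * p = p * Matrix.diagonal d := by
      calc A * p = (p * q) * A * p := by rw [hpq, one_mul]
        _ = p * (q * A * p) := by simp only [mul_assoc]
        _ = p * Matrix.diagonal d := by rw [hP]
    -- columns of P are eigenvectors
    have hcol : ∀ i, A *ᵥ (fun j => p j i)
        = d i • (fun j => p j i) := by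
      intro i
      funext j
      have h1 : (A * p) j i = (p * Matrix.diagonal d) j i := by
        rw [hAP]
      rw [Matrix.mul_apply, Matrix.mul_diagonal] at h1
      simpa [Matrix.mulVec, dotProduct, mul_comm] using h1
    -- v is orthogonal to every column of P
    have hvcol : ∀ i, v ⬝ᵥ (fun j => p j i) = 0 := by
      intro i
      set w : Fin (2 * N) → ℂ := fun j => p j i with hwdef
      have hw : A *ᵥ w = d i • w := hcol i
      by_cases hdi : d i = 1
      · -- polarization within the 1-eigenspace
        have hw1 : A *ᵥ w = w := by rw [hw, hdi, one_smul]
        have e1 : (v + w) ⬝ᵥ (v + w) = 0 :=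
          hcon _ (by rw [Matrix.mulVec_add, hv, hw1])
        have e2 : v ⬝ᵥ v = 0 := hcon v hv
        have e3 : w ⬝ᵥ w = 0 := hcon w hw1
        rw [add_dotProduct, dotProduct_add, dotProduct_add, e2, e3,
          dotProduct_comm w v] at e1
        linear_combination e1 / 2
      · -- other eigenspaces are orthogonal to v
        have h2 : v ⬝ᵥ w = d i * (v ⬝ᵥ w) := by
          conv_lhs => rw [← hdot v w, hv, hw]
          rw [dotProduct_smul, smul_eq_mul]
        have h3 : (1 - d i) * (v ⬝ᵥ w) = 0 := by linear_combination h2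
        rcases mul_eq_zero.mp h3 with h | h
        · exact absurd (by linear_combination -h : d i = 1) hdi
        · exact h
    have hvP : v ᵥ* p = 0 := by
      funext i
      simpa [Matrix.vecMul, dotProduct] using hvcol i
    have : v = 0 := by
      calc v = (v ᵥ* p) ᵥ* q := by
            rw [Matrix.vecMul_vecMul, hpq, Matrix.vecMul_one]
        _ = 0 := by rw [hvP, Matrix.zero_vecMul]
    exact hv0 this
  -- Step 2: build the reflection Q
  obtain ⟨v, hv, hvv⟩ := key
  set t : ℂ := v ⬝ᵥ v with ht
  set c : ℂ := 2 / t with hc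
  have hct : c * t = 2 := div_mul_cancel₀ 2 hvv
  set B : Matrix (Fin (2 * N)) (Fin (2 * N)) ℂ := Matrix.vecMulVec v v with hB
  set Q : Matrix (Fin (2 * N)) (Fin (2 * N)) ℂ := 1 - c • B with hQ
  -- B * B = t • B
  have hBB : B * B = t • B := by
    ext i j
    simp only [hB, Matrix.mul_apply, Matrix.vecMulVec_apply, Matrix.smul_apply, smul_eq_mul, ht,
      dotProduct]
    rw [Finset.sum_mul]
    exact Finset.sum_congr rfl fun k _ => by ring
  -- Q is symmetric
  have hQT : Qᵀ = Q := by
    ext i j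
    simp only [hQ, Matrix.transpose_apply, Matrix.sub_apply, Matrix.smul_apply, Matrix.one_apply,
      hB, Matrix.vecMulVec_apply, smul_eq_mul]
    congr 1
    · simp [eq_comm]
    · ring
  -- Q * Q = 1
  have hQQ : Q * Q = 1 := by
    have h1 : (c • B) * (c • B) = (2 * c) • B := by
      rw [Matrix.smul_mul, Matrix.mul_smul, hBB]
      rw [smul_smul, smul_smul]
      congr 1
      rw [mul_assoc, hct]
      ring
    rw [hQ, sub_mul, mul_sub, mul_sub, h1, two_mul c, add_smul]
    simp only [one_mul, mul_one]
    abel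
  -- A commutes with B, hence with Q
  have hAv' : Aᵀ *ᵥ v = v := by
    calc Aᵀ *ᵥ v = Aᵀ *ᵥ (A *ᵥ v) := by rw [hv]
      _ = (Aᵀ * A) *ᵥ v := by rw [Matrix.mulVec_mulVec]
      _ = v := by rw [hAO, Matrix.one_mulVec]
  have hvA : v ᵥ* A = v := by rw [← Matrix.mulVec_transpose, hAv']
  have hAB : A * B = B := by
    ext i j
    simp only [hB, Matrix.mul_apply, Matrix.vecMulVec_apply]
    calc ∑ k, A i k * (v k * v j) = (∑ k, A i k * v k) * v j := by
          rw [Finset.sum_mul]; exact Finset.sum_congr rfl fun k _ => by ring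
      _ = (A *ᵥ v) i * v j := rfl
      _ = v i * v j := by rw [hv]
  have hBA : B * A = B := by
    ext i j
    simp only [hB, Matrix.mul_apply, Matrix.vecMulVec_apply]
    calc ∑ k, v i * v k * A k j = v i * (∑ k, v k * A k j) := by
          rw [Finset.mul_sum]; exact Finset.sum_congr rfl fun k _ => by ring
      _ = v i * (v ᵥ* A) j := rfl
      _ = v i * v j := by rw [hvA]
  have hcomm : A * Q = Q * A := by
    rw [hQ, mul_sub, sub_mul, mul_one, one_mul, Matrix.mul_smul, Matrix.smul_mul, hAB, hBA]
  -- determinant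
  have hdet : Q.det = -1 := by
    have hQ' : Q = 1 + Matrix.replicateCol Unit ((-c) • v) * Matrix.replicateRow Unit v := by
      rw [hQ, hB, Matrix.vecMulVec_eq Unit]
      rw [Matrix.replicateCol_smul, Matrix.smul_mul, neg_smul, ← sub_eq_add_neg]
    rw [hQ', Matrix.det_one_add_replicateCol_mul_replicateRow]
    rw [dotProduct_smul, smul_eq_mul, ← ht]
    linear_combination -hct
  exact ⟨Q, by rw [hQT, hQQ], hdet, hcomm⟩
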